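/- arXiv:2210.01660 — 2 statements merged into one kernel-verified Lean document; each statement's English description precedes it below -/
import Mathlib

section
/- For every alternating co-Büchi automaton A with m states there exists a universal co-Büchi automaton B with O(2^m) states such that L(A) = L(B). -/
open scoped Classical

/-- An alternating co-Büchi automaton (ACA) `A = (Q, q₀, δ, F)` over alphabet `2^α`.
The transition function is given in DNF set notation: `trans q ι` is a set of
sets of states (each inner set is one disjunct, read conjunctively).
For alternating Büchi automata we reuse this structure, reading `rejecting` as
the set of accepting states `F`. -/
structure ACA (α : Type*) (Q : Type*) where
  init : Q
  trans : Q → Set α → Set (Set Q)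
  rejecting : Set Q

/-- A run tree of an ACA induced by the word `σ`: a `Q`-labeled tree whose root is
labeled with the initial state and such that the set of labels of the children of a
node `x` is one of the disjuncts of the transition formula at `x`. -/
structure RunTree {α Q : Type*} (A : ACA α Q) (σ : ℕ → Set α) where
  nodes : Set (List ℕ)
  label : List ℕ → Q
  root_mem : [] ∈ nodes
  prefix_closed : ∀ x d, x ++ [d] ∈ nodes → x ∈ nodes
  root_label : label [] = A.init
  trans_ok : ∀ x ∈ nodes,
    {q | ∃ d, x ++ [d] ∈ nodes ∧ label (x ++ [d]) = q} ∈ A.trans (label x) (σ x.length)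

/-- An infinite branch of a run tree. -/
def RunTree.IsBranch {α Q : Type*} {A : ACA α Q} {σ : ℕ → Set α} (r : RunTree A σ)
    (b : ℕ → Q) : Prop :=
  ∃ p : ℕ → List ℕ, p 0 = [] ∧ (∀ i, ∃ d, p (i + 1) = p i ++ [d]) ∧
    (∀ i, p i ∈ r.nodes) ∧ ∀ i, b i = r.label (p i)

/-- Co-Büchi acceptance for ACAs: some run tree all of whose infinite branches visit
rejecting states only finitely often. -/
def ACA.Accepts {α Q : Type*} (A : ACA α Q) (σ : ℕ → Set α) : Prop :=
  ∃ r : RunTree A σ, ∀ b, r.IsBranch b → {j | b j ∈ A.rejecting}.Finite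

/-- A strategy for Duplicator in the delay-dominance game: given the history of
state pairs, the current pair `(p,q)` and Spoiler's choice `c ∈ δ(p, σ_j)`, it
chooses `c' ∈ δ(q, σ'_j)`; and given additionally Spoiler's choice `q' ∈ c'`,
it chooses `p' ∈ c`. -/
structure DupStrategy (Q : Type*) where
  chooseSet : List (Q × Q) → Q × Q → Set Q → Set Q
  chooseState : List (Q × Q) → Q × Q → Set Q → Set Q → Q → Q

/-- A strategy for Spoiler in the delay-dominance game: it chooses `c ∈ δ(p, σ_j)`
(first move of a round), and given Duplicator's choice `c'` it chooses `q' ∈ c'`. -/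
structure SpoStrategy (Q : Type*) where
  chooseSet : List (Q × Q) → Q × Q → Set Q
  chooseState : List (Q × Q) → Q × Q → Set Q → Q

namespace DelayDom

variable {α Q : Type*}

/-- The history (list of previous state pairs) of a play `ρ` at round `j`. -/
def hist (ρ : ℕ → Q × Q) (j : ℕ) : List (Q × Q) := (List.range j).map ρ

/-- Histories/positions of the delay-dominance game `(A, σ, σ')` reachable when
Duplicator plays `τ` (Spoiler moving arbitrarily but legally). -/
inductive DupReach (A : ACA α Q) (σ σ' : ℕ → Set α) (τ : DupStrategy Q) :
    List (Q × Q) → Q × Q → Prop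
  | init : DupReach A σ σ' τ [] (A.init, A.init)
  | step {h : List (Q × Q)} {pq : Q × Q} (hr : DupReach A σ σ' τ h pq) {c : Set Q}
      (hc : c ∈ A.trans pq.1 (σ h.length)) {q' : Q}
      (hq' : q' ∈ τ.chooseSet h pq c) :
      DupReach A σ σ' τ (h ++ [pq])
        (τ.chooseState h pq c (τ.chooseSet h pq c) q', q')

/-- Duplicator's strategy `τ` is valid (legal) at every reachable position of the
delay-dominance game `(A, σ, σ')`. -/
def DupValid (A : ACA α Q) (σ σ' : ℕ → Set α) (τ : DupStrategy Q) : Prop :=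
  ∀ h pq, DupReach A σ σ' τ h pq →
    ∀ c ∈ A.trans pq.1 (σ h.length),
      τ.chooseSet h pq c ∈ A.trans pq.2 (σ' h.length) ∧
      ∀ q' ∈ τ.chooseSet h pq c,
        τ.chooseState h pq c (τ.chooseSet h pq c) q' ∈ c

/-- An initial play (sequence of state pairs, one per round) consistent with
Duplicator's strategy `τ` in the delay-dominance game `(A, σ, σ')`. -/
def DupConsistent (A : ACA α Q) (σ σ' : ℕ → Set α) (τ : DupStrategy Q)
    (ρ : ℕ → Q × Q) : Prop :=
  ρ 0 = (A.init, A.init) ∧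
  ∀ j, ∃ c ∈ A.trans (ρ j).1 (σ j),
    (ρ (j + 1)).2 ∈ τ.chooseSet (hist ρ j) (ρ j) c ∧
    (ρ (j + 1)).1 =
      τ.chooseState (hist ρ j) (ρ j) c (τ.chooseSet (hist ρ j) (ρ j) c) ((ρ (j + 1)).2)

/-- Winning condition for Duplicator on a play: every round whose dominant state
(second component) is rejecting is weakly followed by a round whose alternative
state (first component) is rejecting. -/
def WinCond (A : ACA α Q) (ρ : ℕ → Q × Q) : Prop :=
  ∀ j, (ρ j).2 ∈ A.rejecting → ∃ j', j ≤ j' ∧ (ρ j').1 ∈ A.rejecting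

/-- Duplicator wins the delay-dominance game `(A, σ, σ')`. -/
def DupWins (A : ACA α Q) (σ σ' : ℕ → Set α) : Prop :=
  ∃ τ : DupStrategy Q, DupValid A σ σ' τ ∧
    ∀ ρ, DupConsistent A σ σ' τ ρ → WinCond A ρ

/-- Reachable positions when Spoiler plays `μ`. -/
inductive SpoReach (A : ACA α Q) (σ σ' : ℕ → Set α) (μ : SpoStrategy Q) :
    List (Q × Q) → Q × Q → Prop
  | init : SpoReach A σ σ' μ [] (A.init, A.init)
  | step {h : List (Q × Q)} {pq : Q × Q} (hr : SpoReach A σ σ' μ h pq) {c' : Set Q}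
      (hc' : c' ∈ A.trans pq.2 (σ' h.length)) {p' : Q}
      (hp' : p' ∈ μ.chooseSet h pq) :
      SpoReach A σ σ' μ (h ++ [pq]) (p', μ.chooseState h pq c')

/-- Spoiler's strategy `μ` is valid (legal) at every reachable position. -/
def SpoValid (A : ACA α Q) (σ σ' : ℕ → Set α) (μ : SpoStrategy Q) : Prop :=
  ∀ h pq, SpoReach A σ σ' μ h pq →
    μ.chooseSet h pq ∈ A.trans pq.1 (σ h.length) ∧
    ∀ c' ∈ A.trans pq.2 (σ' h.length), μ.chooseState h pq c' ∈ c'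

/-- An initial play consistent with Spoiler's strategy `μ`. -/
def SpoConsistent (A : ACA α Q) (σ σ' : ℕ → Set α) (μ : SpoStrategy Q)
    (ρ : ℕ → Q × Q) : Prop :=
  ρ 0 = (A.init, A.init) ∧
  ∀ j, ∃ c' ∈ A.trans (ρ j).2 (σ' j),
    (ρ (j + 1)).2 = μ.chooseState (hist ρ j) (ρ j) c' ∧
    (ρ (j + 1)).1 ∈ μ.chooseSet (hist ρ j) (ρ j)

end DelayDom

/-- A process strategy: a function from histories of inputs to outputs. -/
abbrev Strat (α : Type*) := List (Set α) → Set α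

/-- The computation of strategy `s` (for a process with inputs `I` and outputs `O`)
on input sequence `γ`: at each step the letter consists of the current inputs
together with the output produced from the input history (Moore-style). -/
def comp {α : Type*} (I O : Set α) (s : Strat α) (γ : ℕ → Set α) : ℕ → Set α :=
  fun j => (γ j ∩ I) ∪ (s ((List.range j).map fun k => γ k ∩ I) ∩ O)

/-- `s` delay-dominates `t` on input `γ` for the ACA `A`: Duplicator wins the
delay-dominance game `(A, comp(t,γ), comp(s,γ))`. -/
def DelayDominatesOn {α Q : Type*} (A : ACA α Q) (I O : Set α) (s t : Strat α)
    (γ : ℕ → Set α) : Prop :=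
  DelayDom.DupWins A (comp I O t γ) (comp I O s γ)

/-- `s` is delay-dominant for `A`: it delay-dominates every alternative strategy on
every input sequence. -/
def DelayDominant {α Q : Type*} (A : ACA α Q) (I O : Set α) (s : Strat α) : Prop :=
  ∀ (t : Strat α) (γ : ℕ → Set α), DelayDominatesOn A I O s t γ

/-- A universal co-Büchi automaton (UCA). -/
structure UCA (α : Type*) (Q : Type*) where
  inits : Set Q
  trans : Set (Q × Set α × Q)
  rejecting : Set Q

def UCA.IsRun {α Q : Type*} (B : UCA α Q) (σ : ℕ → Set α) (r : ℕ → Q) : Prop :=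
  r 0 ∈ B.inits ∧ ∀ j, (r j, σ j, r (j + 1)) ∈ B.trans

/-- UCA acceptance: every run visits rejecting states only finitely often. -/
def UCA.Accepts {α Q : Type*} (B : UCA α Q) (σ : ℕ → Set α) : Prop :=
  ∀ r, B.IsRun σ r → {j | r j ∈ B.rejecting}.Finite

namespace MH

open Classical

noncomputable section

variable {β Q : Type}

/-- The word shifted by `j`. -/
def shiftW (σ : ℕ → Set β) (j : ℕ) : ℕ → Set β := fun k => σ (j + k)

/-- `A` has a good run tree from state `q` at level `j`. -/
def Good (A : ACA β Q) (σ : ℕ → Set β) (q : Q) (j : ℕ) : Prop :=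
  ACA.Accepts ⟨q, A.trans, A.rejecting⟩ (shiftW σ j)

lemma accepts_iff_good (A : ACA β Q) (σ : ℕ → Set β) :
    A.Accepts σ ↔ Good A σ A.init 0 := by
  have h1 : shiftW σ 0 = σ := funext fun k => congrArg σ (Nat.zero_add k)
  have h2 : (⟨A.init, A.trans, A.rejecting⟩ : ACA β Q) = A := by cases A; rfl
  rw [Good, h1, h2]

/-- A chosen good run tree. -/
def gtree (A : ACA β Q) (σ : ℕ → Set β) (q : Q) (j : ℕ) (h : Good A σ q j) :
    RunTree (⟨q, A.trans, A.rejecting⟩ : ACA β Q) (shiftW σ j) := h.choose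

lemma gtree_spec (A : ACA β Q) (σ : ℕ → Set β) (q : Q) (j : ℕ) (h : Good A σ q j) :
    ∀ b, (gtree A σ q j h).IsBranch b → {i | b i ∈ A.rejecting}.Finite := h.choose_spec

def gtN (A : ACA β Q) (σ : ℕ → Set β) (q : Q) (j : ℕ) : Set (List ℕ) :=
  if h : Good A σ q j then (gtree A σ q j h).nodes else ∅

def gtL (A : ACA β Q) (σ : ℕ → Set β) (q : Q) (j : ℕ) : List ℕ → Q :=
  if h : Good A σ q j then (gtree A σ q j h).label else fun _ => q

lemma gtN_pos {A : ACA β Q} {σ : ℕ → Set β} {q : Q} {j : ℕ} (h : Good A σ q j) :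
    gtN A σ q j = (gtree A σ q j h).nodes := dif_pos h

lemma gtL_pos {A : ACA β Q} {σ : ℕ → Set β} {q : Q} {j : ℕ} (h : Good A σ q j) :
    gtL A σ q j = (gtree A σ q j h).label := dif_pos h

lemma gtL_nil (A : ACA β Q) (σ : ℕ → Set β) (q : Q) (j : ℕ) :
    gtL A σ q j [] = q := by
  by_cases h : Good A σ q j
  · rw [gtL_pos h]; exact (gtree A σ q j h).root_label
  · rw [gtL, dif_neg h]

section Splice

variable (A : ACA β Q) (σ : ℕ → Set β) (W : Q → ℕ → Prop) (ι : Q → ℕ)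

/-- The chosen move at a stem position. -/
def move (q : Q) (l : ℕ) : Set Q :=
  if h : ∃ d ∈ A.trans q (σ l), ∀ q' ∈ d, W q' (l + 1) ∨ Good A σ q' (l + 1) then
    h.choose else ∅

lemma move_spec {q : Q} {l : ℕ}
    (h : ∃ d ∈ A.trans q (σ l), ∀ q' ∈ d, W q' (l + 1) ∨ Good A σ q' (l + 1)) :
    move A σ W q l ∈ A.trans q (σ l) ∧
      ∀ q' ∈ move A σ W q l, W q' (l + 1) ∨ Good A σ q' (l + 1) := by
  rw [move, dif_pos h]
  exact h.choose_spec

/-- Decode a child index into a state of the chosen move. -/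
def pick (q : Q) (l : ℕ) (k : ℕ) : Option Q :=
  if h : ∃ q' ∈ move A σ W q l, ι q' = k then some h.choose else none

lemma pick_some {q : Q} {l k : ℕ} {q' : Q} (h : pick A σ W ι q l k = some q') :
    q' ∈ move A σ W q l ∧ ι q' = k := by
  by_cases hex : ∃ p ∈ move A σ W q l, ι p = k
  · rw [pick, dif_pos hex] at h
    obtain rfl : hex.choose = q' := by simpa using h
    exact hex.choose_spec
  · rw [pick, dif_neg hex] at h
    cases h

lemma pick_of_mem (hι : Function.Injective ι) {q : Q} {l : ℕ} {q' : Q}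
    (h : q' ∈ move A σ W q l) : pick A σ W ι q l (ι q') = some q' := by
  have hex : ∃ p ∈ move A σ W q l, ι p = ι q' := ⟨q', h, rfl⟩
  rw [pick, dif_pos hex]
  exact congrArg some (hι hex.choose_spec.2)

/-- Status of a node: walks down the stem.  Result `some (p, m, true, [])` means a
stem node at state `p`, level `m`; `some (p, m, false, y)` means the node is `y`
inside the good tree grafted at `(p, m)`. -/
def st : List ℕ → Q → ℕ → Option (Q × ℕ × Bool × List ℕ)
  | [], q, l => some (q, l, true, [])
  | k :: xs, q, l =>
    (pick A σ W ι q l k).elim none fun q' =>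
      if W q' (l + 1) then st xs q' (l + 1) else some (q', l + 1, false, xs)

/-- One-step extension of a stem node. -/
def step1 (p : Q) (m : ℕ) (d : ℕ) : Option (Q × ℕ × Bool × List ℕ) :=
  (pick A σ W ι p m d).elim none fun q' =>
    if W q' (m + 1) then some (q', m + 1, true, []) else some (q', m + 1, false, [])

lemma st_append_none {d : ℕ} :
    ∀ (x : List ℕ) (q : Q) (l : ℕ), st A σ W ι x q l = none →
      st A σ W ι (x ++ [d]) q l = none
  | [], q, l, h => by simp [st] at h
  | k :: xs, q, l, h => by
    rw [st] at h
    rw [List.cons_append, st]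
    rcases hp : pick A σ W ι q l k with _ | q'
    · simp only [Option.elim_none]
    · rw [hp, Option.elim_some] at h
      simp only [Option.elim_some]
      by_cases hW : W q' (l + 1)
      · rw [if_pos hW] at h ⊢
        exact st_append_none xs q' (l + 1) h
      · rw [if_neg hW] at h
        simp at h

lemma st_append_true {d : ℕ} :
    ∀ (x : List ℕ) (q : Q) (l : ℕ) {p : Q} {m : ℕ} {y : List ℕ},
      st A σ W ι x q l = some (p, m, true, y) →
      st A σ W ι (x ++ [d]) q l = step1 A σ W ι p m d
  | [], q, l, p, m, y, h => by
    rw [st] at h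
    obtain ⟨rfl, rfl, -, rfl⟩ : q = p ∧ l = m ∧ True ∧ [] = y := by
      simpa using h
    rw [List.nil_append, st, step1]
    rcases hp : pick A σ W ι q l d with _ | q' <;>
      simp only [Option.elim_none, Option.elim_some]
    by_cases hW : W q' (l + 1)
    · rw [if_pos hW, if_pos hW, st]
    · rw [if_neg hW, if_neg hW]
  | k :: xs, q, l, p, m, y, h => by
    rw [st] at h
    rw [List.cons_append, st]
    rcases hp : pick A σ W ι q l k with _ | q'
    · rw [hp, Option.elim_none] at h
      cases h
    · rw [hp, Option.elim_some] at h
      simp only [Option.elim_some]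
      by_cases hW : W q' (l + 1)
      · rw [if_pos hW] at h ⊢
        exact st_append_true xs q' (l + 1) h
      · rw [if_neg hW] at h
        simp at h

lemma st_append_false {d : ℕ} :
    ∀ (x : List ℕ) (q : Q) (l : ℕ) {p : Q} {m : ℕ} {y : List ℕ},
      st A σ W ι x q l = some (p, m, false, y) →
      st A σ W ι (x ++ [d]) q l = some (p, m, false, y ++ [d])
  | [], q, l, p, m, y, h => by simp [st] at h
  | k :: xs, q, l, p, m, y, h => by
    rw [st] at h
    rw [List.cons_append, st]
    rcases hp : pick A σ W ι q l k with _ | q'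
    · rw [hp, Option.elim_none] at h
      cases h
    · rw [hp, Option.elim_some] at h
      simp only [Option.elim_some]
      by_cases hW : W q' (l + 1)
      · rw [if_pos hW] at h ⊢
        exact st_append_false xs q' (l + 1) h
      · rw [if_neg hW] at h ⊢
        obtain ⟨rfl, rfl, rfl⟩ : q' = p ∧ l + 1 = m ∧ xs = y := by
          simpa using h
        rfl

lemma st_spec
    (h2 : ∀ p l, W p l → ∃ d ∈ A.trans p (σ l), ∀ q' ∈ d, W q' (l + 1) ∨ Good A σ q' (l + 1)) :
    ∀ (x : List ℕ) (q : Q) (l : ℕ), W q l →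
      (∀ {p : Q} {m : ℕ} {y : List ℕ}, st A σ W ι x q l = some (p, m, true, y) →
          W p m ∧ m = l + x.length ∧ y = []) ∧
      (∀ {p : Q} {m : ℕ} {y : List ℕ}, st A σ W ι x q l = some (p, m, false, y) →
          Good A σ p m ∧ m + y.length = l + x.length)
  | [], q, l, hW => by
    constructor
    · intro p m y h
      obtain ⟨rfl, rfl, -, rfl⟩ : q = p ∧ l = m ∧ True ∧ [] = y := by
        simpa [st] using h
      exact ⟨hW, by simp, rfl⟩
    · intro p m y h
      simp [st] at h
  | k :: xs, q, l, hW => by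
    rcases hp : pick A σ W ι q l k with _ | q'
    · constructor <;> intro p m y h <;> rw [st, hp, Option.elim_none] at h <;> cases h
    · have hq' : q' ∈ move A σ W q l := (pick_some A σ W ι hp).1
      have horG := (move_spec A σ W (h2 q l hW)).2 q' hq'
      by_cases hWq : W q' (l + 1)
      · have ih := st_spec h2 xs q' (l + 1) hWq
        constructor <;> intro p m y h <;>
          rw [st, hp, Option.elim_some, if_pos hWq] at h
        · obtain ⟨ha, hb, hc⟩ := ih.1 h
          refine ⟨ha, ?_, hc⟩
          rw [hb, List.length_cons]
          omega
        · obtain ⟨ha, hb⟩ := ih.2 h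
          refine ⟨ha, ?_⟩
          rw [List.length_cons]
          omega
      · constructor <;> intro p m y h <;>
          rw [st, hp, Option.elim_some, if_neg hWq] at h
        · simp at h
        · obtain ⟨rfl, rfl, rfl⟩ : q' = p ∧ l + 1 = m ∧ xs = y := by simpa using h
          refine ⟨horG.resolve_left hWq, ?_⟩
          rw [List.length_cons]
          omega

/-- Whether a status is a legal node. -/
def okRes : Option (Q × ℕ × Bool × List ℕ) → Prop
  | none => False
  | some (_, _, true, _) => True
  | some (p, m, false, y) => y ∈ gtN A σ p m

/-- The label carried by a status. -/
def labRes (fb : Q) : Option (Q × ℕ × Bool × List ℕ) → Q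
  | none => fb
  | some (p, _, true, _) => p
  | some (p, m, false, y) => gtL A σ p m y

@[simp] lemma okRes_none : okRes A σ (none : Option (Q × ℕ × Bool × List ℕ)) = False := rfl
@[simp] lemma okRes_true (p : Q) (m : ℕ) (y : List ℕ) :
    okRes A σ (some (p, m, true, y)) = True := rfl
@[simp] lemma okRes_false (p : Q) (m : ℕ) (y : List ℕ) :
    okRes A σ (some (p, m, false, y)) = (y ∈ gtN A σ p m) := rfl
@[simp] lemma labRes_none (fb : Q) : labRes A σ fb none = fb := rfl
@[simp] lemma labRes_true (fb p : Q) (m : ℕ) (y : List ℕ) :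
    labRes A σ fb (some (p, m, true, y)) = p := rfl
@[simp] lemma labRes_false (fb p : Q) (m : ℕ) (y : List ℕ) :
    labRes A σ fb (some (p, m, false, y)) = gtL A σ p m y := rfl

theorem splice (hι : Function.Injective ι)
    (h2 : ∀ p l, W p l → ∃ d ∈ A.trans p (σ l), ∀ q' ∈ d, W q' (l + 1) ∨ Good A σ q' (l + 1))
    (q0 : Q) (j0 : ℕ) (hW0 : W q0 j0)
    (h1 : ∀ p l, W p l → p ∈ A.rejecting → l ≤ j0) :
    Good A σ q0 j0 := by
  classical
  refine ⟨⟨{x | okRes A σ (st A σ W ι x q0 j0)},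
    fun x => labRes A σ q0 (st A σ W ι x q0 j0), ?_, ?_, ?_, ?_⟩, ?_⟩
  · -- root_mem
    show okRes A σ (st A σ W ι [] q0 j0)
    rw [show st A σ W ι [] q0 j0 = some (q0, j0, true, []) from rfl, okRes_true]
    trivial
  · -- prefix_closed
    intro x d hxd
    simp only [Set.mem_setOf_eq] at hxd ⊢
    rcases hst : st A σ W ι x q0 j0 with _ | ⟨p, m, b, y⟩
    · rw [st_append_none A σ W ι x q0 j0 hst, okRes_none] at hxd
      exact hxd.elim
    · cases b
      · rw [st_append_false A σ W ι x q0 j0 hst, okRes_false] at hxd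
        rw [okRes_false]
        by_cases hG : Good A σ p m
        · rw [gtN_pos hG] at hxd ⊢
          exact (gtree A σ p m hG).prefix_closed y d hxd
        · rw [gtN, dif_neg hG] at hxd
          exact hxd.elim
      · exact trivial
  · -- root_label
    rfl
  · -- trans_ok
    intro x hx
    simp only [Set.mem_setOf_eq] at hx
    show {q | ∃ d, okRes A σ (st A σ W ι (x ++ [d]) q0 j0) ∧
        labRes A σ q0 (st A σ W ι (x ++ [d]) q0 j0) = q} ∈
      A.trans (labRes A σ q0 (st A σ W ι x q0 j0)) (σ (j0 + x.length))
    rcases hst : st A σ W ι x q0 j0 with _ | ⟨p, m, b, y⟩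
    · rw [hst, okRes_none] at hx
      exact hx.elim
    · cases b
      · -- inside a grafted good tree
        have hsp := (st_spec A σ W ι h2 x q0 j0 hW0).2 hst
        have hG : Good A σ p m := hsp.1
        rw [hst, okRes_false, gtN_pos hG] at hx
        have key : {q | ∃ d, okRes A σ (st A σ W ι (x ++ [d]) q0 j0) ∧
            labRes A σ q0 (st A σ W ι (x ++ [d]) q0 j0) = q} =
            {q | ∃ d, y ++ [d] ∈ (gtree A σ p m hG).nodes ∧
              (gtree A σ p m hG).label (y ++ [d]) = q} := by
          ext qq
          simp only [Set.mem_setOf_eq]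
          constructor
          · rintro ⟨d, hok, hlab⟩
            rw [st_append_false A σ W ι x q0 j0 hst, okRes_false, gtN_pos hG] at hok
            rw [st_append_false A σ W ι x q0 j0 hst, labRes_false, gtL_pos hG] at hlab
            exact ⟨d, hok, hlab⟩
          · rintro ⟨d, hok, hlab⟩
            refine ⟨d, ?_, ?_⟩
            · rw [st_append_false A σ W ι x q0 j0 hst, okRes_false, gtN_pos hG]
              exact hok
            · rw [st_append_false A σ W ι x q0 j0 hst, labRes_false, gtL_pos hG]
              exact hlab
        rw [key, labRes_false, gtL_pos hG]
        have htr := (gtree A σ p m hG).trans_ok y hx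
        have hσ : shiftW σ m y.length = σ (j0 + x.length) := by
          show σ (m + y.length) = σ (j0 + x.length)
          rw [hsp.2]
        rw [hσ] at htr
        exact htr
      · -- stem node
        have hsp := (st_spec A σ W ι h2 x q0 j0 hW0).1 hst
        have key : {q | ∃ d, okRes A σ (st A σ W ι (x ++ [d]) q0 j0) ∧
            labRes A σ q0 (st A σ W ι (x ++ [d]) q0 j0) = q} = move A σ W p m := by
          ext qq
          simp only [Set.mem_setOf_eq]
          constructor
          · rintro ⟨d, hok, hlab⟩
            rw [st_append_true A σ W ι x q0 j0 hst] at hok hlab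
            rcases hp : pick A σ W ι p m d with _ | q'
            · rw [step1, hp, Option.elim_none, okRes_none] at hok
              exact hok.elim
            · have hq'm := (pick_some A σ W ι hp).1
              rw [step1, hp, Option.elim_some] at hlab
              by_cases hWq : W q' (m + 1)
              · rw [if_pos hWq, labRes_true] at hlab
                exact hlab ▸ hq'm
              · rw [if_neg hWq, labRes_false, gtL_nil] at hlab
                exact hlab ▸ hq'm
          · intro hq
            have hpk := pick_of_mem A σ W ι hι hq
            refine ⟨ι qq, ?_, ?_⟩
            · rw [st_append_true A σ W ι x q0 j0 hst, step1, hpk, Option.elim_some]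
              by_cases hWq : W qq (m + 1)
              · rw [if_pos hWq, okRes_true]
                trivial
              · rw [if_neg hWq, okRes_false]
                have hGq : Good A σ qq (m + 1) :=
                  ((move_spec A σ W (h2 p m hsp.1)).2 qq hq).resolve_left hWq
                rw [gtN_pos hGq]
                exact (gtree A σ qq (m + 1) hGq).root_mem
            · rw [st_append_true A σ W ι x q0 j0 hst, step1, hpk, Option.elim_some]
              by_cases hWq : W qq (m + 1)
              · rw [if_pos hWq, labRes_true]
              · rw [if_neg hWq, labRes_false, gtL_nil]
        rw [key, labRes_true, ← hsp.2.1]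
        exact (move_spec A σ W (h2 p m hsp.1)).1
  · -- all branches visit rejecting states finitely often
    intro b hb
    obtain ⟨P, hP0, hPstep, hPmem, hPlab⟩ := hb
    have hlen : ∀ i, (P i).length = i := by
      intro i
      induction i with
      | zero => rw [hP0]; rfl
      | succ i ih =>
        obtain ⟨d, hd⟩ := hPstep i
        rw [hd, List.length_append, ih]
        rfl
    have hmem : ∀ i, okRes A σ (st A σ W ι (P i) q0 j0) := hPmem
    have hlab : ∀ i, b i = labRes A σ q0 (st A σ W ι (P i) q0 j0) := hPlab
    show {j | b j ∈ A.rejecting}.Finite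
    by_cases hΦ : ∃ i, ∃ p m y, st A σ W ι (P i) q0 j0 = some (p, m, false, y)
    · set i1 := Nat.find hΦ with hi1def
      have hi1pos : 1 ≤ i1 := by
        rcases Nat.eq_zero_or_pos i1 with h0 | h0
        · exfalso
          obtain ⟨p, m, y, hst1⟩ := Nat.find_spec hΦ
          rw [← hi1def, h0, hP0] at hst1
          rw [show st A σ W ι [] q0 j0 = some (q0, j0, true, []) from rfl] at hst1
          simp at hst1
        · exact h0
      have hnot0 : ¬ ∃ p m y, st A σ W ι (P (i1 - 1)) q0 j0 = some (p, m, false, y) :=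
        Nat.find_min hΦ (by omega)
      have hstem0 : ∃ p0 m0, st A σ W ι (P (i1 - 1)) q0 j0 = some (p0, m0, true, []) := by
        rcases hst : st A σ W ι (P (i1 - 1)) q0 j0 with _ | ⟨p, m, b', y⟩
        · have := hmem (i1 - 1)
          rw [hst, okRes_none] at this
          exact this.elim
        · cases b'
          · exact absurd ⟨p, m, y, hst⟩ hnot0
          · have hy := ((st_spec A σ W ι h2 (P (i1 - 1)) q0 j0 hW0).1 hst).2.2
            exact ⟨p, m, by rw [hy]⟩
      obtain ⟨p0, m0, hst0⟩ := hstem0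
      obtain ⟨dd, hdd⟩ := hPstep (i1 - 1)
      rw [show i1 - 1 + 1 = i1 by omega] at hdd
      have hst1' : st A σ W ι (P i1) q0 j0 = step1 A σ W ι p0 m0 dd := by
        rw [hdd]
        exact st_append_true A σ W ι (P (i1 - 1)) q0 j0 hst0
      have hfalse : ∃ p m, st A σ W ι (P i1) q0 j0 = some (p, m, false, []) := by
        obtain ⟨p, m, y1, hst1⟩ := Nat.find_spec hΦ
        rw [← hi1def] at hst1
        rw [hst1'] at hst1
        rcases hp : pick A σ W ι p0 m0 dd with _ | q'
        · rw [step1, hp, Option.elim_none] at hst1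
          cases hst1
        · by_cases hWq : W q' (m0 + 1)
          · rw [step1, hp, Option.elim_some, if_pos hWq] at hst1
            simp at hst1
          · exact ⟨q', m0 + 1, by
              rw [hst1', step1, hp, Option.elim_some, if_neg hWq]⟩
      obtain ⟨p, m, hstF⟩ := hfalse
      have hG : Good A σ p m :=
        ((st_spec A σ W ι h2 (P i1) q0 j0 hW0).2 hstF).1
      have hdrop0 : (P i1).drop i1 = [] := by
        have h : (P i1).drop (P i1).length = [] := List.drop_length
        rw [hlen i1] at h
        exact h
      have hstep' : ∀ s, ∃ dd2, P (i1 + (s + 1)) = P (i1 + s) ++ [dd2] ∧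
          (P (i1 + (s + 1))).drop i1 = (P (i1 + s)).drop i1 ++ [dd2] := by
        intro s
        obtain ⟨dd2, hdd2⟩ := hPstep (i1 + s)
        refine ⟨dd2, hdd2, ?_⟩
        have hz : i1 - (P (i1 + s)).length = 0 := by rw [hlen]; omega
        rw [show i1 + (s + 1) = (i1 + s) + 1 from rfl, hdd2,
          List.drop_append, hz, List.drop_zero]
      have hclaim : ∀ s, st A σ W ι (P (i1 + s)) q0 j0 =
          some (p, m, false, (P (i1 + s)).drop i1) := by
        intro s
        induction s with
        | zero =>
          rw [show i1 + 0 = i1 from rfl, hdrop0]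
          exact hstF
        | succ s ih =>
          obtain ⟨dd2, hdd2, hdr⟩ := hstep' s
          rw [hdd2] at hdr ⊢
          rw [hdr]
          exact st_append_false A σ W ι (P (i1 + s)) q0 j0 ih
      have hTb : RunTree.IsBranch (gtree A σ p m hG) (fun s => b (i1 + s)) := by
        refine ⟨fun s => (P (i1 + s)).drop i1, hdrop0, ?_, ?_, ?_⟩
        · intro s
          obtain ⟨dd2, _, hdr⟩ := hstep' s
          exact ⟨dd2, hdr⟩
        · intro s
          have := hmem (i1 + s)
          rw [hclaim s, okRes_false, gtN_pos hG] at this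
          exact this
        · intro s
          show b (i1 + s) = (gtree A σ p m hG).label (List.drop i1 (P (i1 + s)))
          rw [hlab (i1 + s), hclaim s, labRes_false, gtL_pos hG]
      have hfin := gtree_spec A σ p m hG _ hTb
      have hsub : {j | b j ∈ A.rejecting} ⊆
          Set.Iio i1 ∪ (fun s => i1 + s) '' {s | b (i1 + s) ∈ A.rejecting} := by
        intro i hi
        by_cases hlt : i < i1
        · exact Or.inl hlt
        · refine Or.inr ⟨i - i1, ?_, ?_⟩
          · show b (i1 + (i - i1)) ∈ A.rejecting
            rw [show i1 + (i - i1) = i by omega]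
            exact hi
          · show i1 + (i - i1) = i
            omega
      exact Set.Finite.subset ((Set.finite_Iio i1).union (Set.Finite.image _ hfin)) hsub
    · -- the branch stays in the stem forever
      push_neg at hΦ
      have hstem : ∀ i, ∃ p m, st A σ W ι (P i) q0 j0 = some (p, m, true, []) := by
        intro i
        rcases hst : st A σ W ι (P i) q0 j0 with _ | ⟨p, m, b', y⟩
        · have := hmem i
          rw [hst, okRes_none] at this
          exact this.elim
        · cases b'
          · exact absurd hst (hΦ i p m y)
          · have hy := ((st_spec A σ W ι h2 (P i) q0 j0 hW0).1 hst).2.2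
            exact ⟨p, m, by rw [hy]⟩
      apply Set.Finite.subset (Set.finite_singleton 0)
      intro i hi
      obtain ⟨p, m, hst⟩ := hstem i
      have hsp := (st_spec A σ W ι h2 (P i) q0 j0 hW0).1 hst
      have hbi : b i = p := by rw [hlab i, hst, labRes_true]
      have hple : m ≤ j0 := h1 p m hsp.1 (hbi ▸ hi)
      have hm : m = j0 + i := by rw [hsp.2.1, hlen i]
      simp only [Set.mem_singleton_iff]
      omega


end Splice

section Rank

variable [Fintype Q] (A : ACA β Q) (σ : ℕ → Set β)

/-- Iterates of the "Spoiler can force reaching a rejecting state" operator. -/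
def R : ℕ → Q → ℕ → Prop
  | 0, _, _ => False
  | n + 1, q, j => ¬ Good A σ q j ∧
      (q ∈ A.rejecting ∨ ∀ d ∈ A.trans q (σ j), ∃ q' ∈ d, R n q' (j + 1))

lemma R_mono : ∀ (n : ℕ) (q : Q) (j : ℕ), R A σ n q j → R A σ (n + 1) q j
  | 0, _, _, h => h.elim
  | n + 1, q, j, h => ⟨h.1, h.2.imp id fun hstep d hd =>
      let ⟨q', hq', hR⟩ := hstep d hd; ⟨q', hq', R_mono n q' (j + 1) hR⟩⟩

lemma R_le {n n' : ℕ} (h : n ≤ n') {q : Q} {j : ℕ} (hR : R A σ n q j) : R A σ n' q j := by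
  induction h with
  | refl => exact hR
  | step _ ih => exact R_mono A σ _ _ _ ih

lemma exists_inj_nat : ∃ f : Q → ℕ, Function.Injective f :=
  ⟨fun q => ((Fintype.equivFin Q) q : ℕ),
    Fin.val_injective.comp (Fintype.equivFin Q).injective⟩

lemma bad_step {q : Q} {j : ℕ} (hbad : ¬ Good A σ q j) :
    ∀ d ∈ A.trans q (σ j), ∃ q' ∈ d, ¬ Good A σ q' (j + 1) := by
  intro d hd
  by_contra hcon
  push_neg at hcon
  apply hbad
  obtain ⟨ι, hι⟩ := exists_inj_nat (Q := Q)
  refine splice A σ (fun p l => p = q ∧ l = j) ι hι ?_ q j ⟨rfl, rfl⟩ ?_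
  · rintro p l ⟨rfl, rfl⟩
    exact ⟨d, hd, fun q' hq' => Or.inr (hcon q' hq')⟩
  · rintro p l ⟨rfl, rfl⟩ _
    exact le_refl l

lemma bad_R {q : Q} {j : ℕ} (hbad : ¬ Good A σ q j) : ∃ n, R A σ n q j := by
  by_contra hn
  push_neg at hn
  apply hbad
  obtain ⟨ι, hι⟩ := exists_inj_nat (Q := Q)
  refine splice A σ (fun p l => ¬ Good A σ p l ∧ ∀ n, ¬ R A σ n p l) ι hι ?_ q j ⟨hbad, hn⟩ ?_
  · rintro p l ⟨hb, hr⟩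
    by_contra hcon
    push_neg at hcon
    have key : ∀ dd : Set Q, ∃ n : ℕ, dd ∈ A.trans p (σ l) → ∃ q' ∈ dd, R A σ n q' (l + 1) := by
      intro dd
      by_cases hdd : dd ∈ A.trans p (σ l)
      · obtain ⟨q', hq', hnP⟩ := hcon dd hdd
        have hng : ¬ Good A σ q' (l + 1) := hnP.2
        have hnw := hnP.1
        have : ¬ ∀ n, ¬ R A σ n q' (l + 1) := fun hall => by obtain ⟨n, hn⟩ := hnw hng; exact hall n hn
        obtain ⟨n, hRn⟩ := not_forall.1 this
        exact ⟨n, fun _ => ⟨q', hq', not_not.1 hRn⟩⟩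
      · exact ⟨0, fun h => absurd h hdd⟩
    choose g hg using key
    apply hr (Finset.univ.sup g + 1)
    refine ⟨hb, Or.inr ?_⟩
    intro dd hdd
    obtain ⟨q', hq', hR⟩ := hg dd hdd
    exact ⟨q', hq', R_le A σ (Finset.le_sup (Finset.mem_univ dd)) hR⟩
  · rintro p l ⟨hb, hr⟩ hrej
    exact ((hr 1) ⟨hb, Or.inl hrej⟩).elim

/-- Rank of a losing position. -/
def rk (q : Q) (j : ℕ) : ℕ := sInf {n | R A σ n q j}

lemma rk_spec {q : Q} {j : ℕ} (hbad : ¬ Good A σ q j) : R A σ (rk A σ q j) q j :=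
  Nat.sInf_mem (bad_R A σ hbad)

lemma rk_pos {q : Q} {j : ℕ} (hbad : ¬ Good A σ q j) : 0 < rk A σ q j := by
  rcases Nat.eq_zero_or_pos (rk A σ q j) with h | h
  · exfalso
    have hR := rk_spec A σ hbad
    rw [h] at hR
    exact hR
  · exact h

lemma rk_lt {q : Q} {j : ℕ} (hbad : ¬ Good A σ q j) (hnr : q ∉ A.rejecting) :
    ∀ d ∈ A.trans q (σ j), ∃ q' ∈ d,
      ¬ Good A σ q' (j + 1) ∧ rk A σ q' (j + 1) < rk A σ q j := by
  intro d hd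
  have hR := rk_spec A σ hbad
  rcases hk : rk A σ q j with _ | n
  · rw [hk] at hR
    exact hR.elim
  · rw [hk] at hR
    obtain ⟨q', hq', hRn⟩ := (hR.2.resolve_left hnr) d hd
    refine ⟨q', hq', ?_, ?_⟩
    · cases n with
      | zero => exact hRn.elim
      | succ k => exact hRn.1
    · exact Nat.lt_succ_of_le (Nat.sInf_le hRn)

end Rank

/-- Models of the dual transition formula: sets hitting every disjunct. -/
def Hit (A : ACA β Q) (q : Q) (a : Set β) : Set (Set Q) :=
  {c | ∀ d ∈ A.trans q a, (c ∩ d).Nonempty}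

/-- The dualized Miyano-Hayashi (breakpoint) universal co-Büchi automaton. -/
def mh (A : ACA β Q) : UCA β (Set Q × Set Q) where
  inits := {({A.init}, ∅)}
  trans := {t | ∃ f : Q → Set Q, (∀ q ∈ t.1.1, f q ∈ Hit A q t.2.1) ∧
      t.2.2.1 = ⋃ q ∈ t.1.1, f q ∧
      t.2.2.2 = (if t.1.2 = ∅ then t.2.2.1 else ⋃ q ∈ t.1.2, f q) \ A.rejecting}
  rejecting := {s | s.2 = ∅}

theorem accepts_mh_of_accepts (A : ACA β Q) (σ : ℕ → Set β) (hA : A.Accepts σ) :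
    (mh A).Accepts σ := by
  obtain ⟨T, hT⟩ := hA
  intro r hr
  by_contra hinf
  have hinf' : {j | r j ∈ (mh A).rejecting}.Infinite := hinf
  obtain ⟨hr0, hrt⟩ := hr
  have hr0' : r 0 = ({A.init}, ∅) := Set.eq_of_mem_singleton hr0
  have hrt' : ∀ j, ∃ f : Q → Set Q, (∀ q ∈ (r j).1, f q ∈ Hit A q (σ j)) ∧
      (r (j + 1)).1 = ⋃ q ∈ (r j).1, f q ∧
      (r (j + 1)).2 = (if (r j).2 = ∅ then (r (j + 1)).1
        else ⋃ q ∈ (r j).2, f q) \ A.rejecting := hrt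
  choose f hf1 hf2 hf3 using hrt'
  -- build a branch of T tracking the run
  set Inv : ℕ → Q × List ℕ → Prop := fun j v =>
    v.1 ∈ (r j).1 ∧ v.2 ∈ T.nodes ∧ T.label v.2 = v.1 ∧ v.2.length = j with hInvdef
  have hInv0 : Inv 0 (A.init, ([] : List ℕ)) := by
    refine ⟨?_, T.root_mem, T.root_label, rfl⟩
    rw [hr0']
    exact Set.mem_singleton _
  have hstep : ∀ j v, Inv j v → ∃ w : Q × List ℕ, Inv (j + 1) w ∧ w.1 ∈ f j v.1 ∧
      ∃ dd, w.2 = v.2 ++ [dd] := by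
    intro j v hv
    obtain ⟨hv1, hv2, hv3, hv4⟩ := hv
    have htr := T.trans_ok v.2 hv2
    rw [hv3, hv4] at htr
    obtain ⟨q', hq'f, hq'd⟩ := hf1 j v.1 hv1 _ htr
    obtain ⟨dd, hdmem, hdlab⟩ := hq'd
    refine ⟨(q', v.2 ++ [dd]), ⟨?_, hdmem, hdlab, ?_⟩, hq'f, dd, rfl⟩
    · rw [hf2 j]
      exact Set.mem_biUnion hv1 hq'f
    · rw [List.length_append, hv4]
      rfl
  let nxt : ∀ j, {v // Inv j v} → {v // Inv (j + 1) v} := fun j v =>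
    ⟨Classical.choose (hstep j v.1 v.2), (Classical.choose_spec (hstep j v.1 v.2)).1⟩
  let g : ∀ j, {v // Inv j v} := fun j => Nat.rec ⟨(A.init, ([] : List ℕ)), hInv0⟩ nxt j
  have hgf : ∀ j, (g (j + 1)).1.1 ∈ f j (g j).1.1 :=
    fun j => (Classical.choose_spec (hstep j (g j).1 (g j).2)).2.1
  have hgstep : ∀ j, ∃ dd, (g (j + 1)).1.2 = (g j).1.2 ++ [dd] :=
    fun j => (Classical.choose_spec (hstep j (g j).1 (g j).2)).2.2
  set bq : ℕ → Q := fun i => (g i).1.1 with hbqdef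
  have hbr : T.IsBranch bq := by
    refine ⟨fun i => (g i).1.2, rfl, hgstep, fun i => (g i).2.2.1, fun i => ((g i).2.2.2.1).symm⟩
  have hfin := hT bq hbr
  obtain ⟨t, ht⟩ := hfin.bddAbove
  have hunb : ∀ a : ℕ, ∃ j, (r j).2 = ∅ ∧ a < j := by
    intro a
    by_contra hcon
    push_neg at hcon
    exact (Set.Infinite.not_bddAbove hinf') ⟨a, fun x hx => hcon x hx⟩
  obtain ⟨j0, hj0mem, hj0gt⟩ := hunb t
  have hclaim : ∀ s, bq (j0 + 1 + s) ∈ (r (j0 + 1 + s)).2 := by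
    intro s
    induction s with
    | zero =>
      rw [hf3 j0, if_pos hj0mem]
      refine ⟨(g (j0 + 1)).2.1, fun hrej => ?_⟩
      exact absurd (ht hrej) (by omega)
    | succ s ih =>
      have hk : (r (j0 + 1 + s)).2 ≠ ∅ := Set.nonempty_iff_ne_empty.1 ⟨bq (j0 + 1 + s), ih⟩
      rw [show j0 + 1 + (s + 1) = (j0 + 1 + s) + 1 by omega]
      rw [hf3 (j0 + 1 + s), if_neg hk]
      refine ⟨Set.mem_biUnion ih (hgf (j0 + 1 + s)), fun hrej => ?_⟩
      exact absurd (ht hrej) (by omega)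
  obtain ⟨j1, hj1mem, hj1gt⟩ := hunb (j0 + 1)
  have hmem := hclaim (j1 - (j0 + 1))
  rw [show j0 + 1 + (j1 - (j0 + 1)) = j1 by omega, hj1mem] at hmem
  exact Set.notMem_empty _ hmem

section Dir2

variable [Fintype Q] (A : ACA β Q) (σ : ℕ → Set β)

/-- The rank-based choice function for the Spoiler-winning run. -/
def fch (j : ℕ) (q : Q) : Set Q :=
  {q' | ¬ Good A σ q' (j + 1) ∧ (q ∈ A.rejecting ∨ rk A σ q' (j + 1) < rk A σ q j)}

lemma fch_hit {q : Q} {j : ℕ} (hbad : ¬ Good A σ q j) : fch A σ j q ∈ Hit A q (σ j) := by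
  intro d hd
  by_cases hrej : q ∈ A.rejecting
  · obtain ⟨q', hq', hb'⟩ := bad_step A σ hbad d hd
    exact ⟨q', ⟨hb', Or.inl hrej⟩, hq'⟩
  · obtain ⟨q', hq', hb', hlt⟩ := rk_lt A σ hbad hrej d hd
    exact ⟨q', ⟨hb', Or.inr hlt⟩, hq'⟩

/-- The Spoiler-winning run of the MH automaton. -/
def SO : ℕ → Set Q × Set Q := fun j =>
  Nat.rec ({A.init}, ∅)
    (fun j so =>
      (⋃ q ∈ so.1, fch A σ j q,
       (if so.2 = ∅ then ⋃ q ∈ so.1, fch A σ j q else ⋃ q ∈ so.2, fch A σ j q) \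
         A.rejecting)) j

lemma SO_zero_fst : (SO A σ 0).1 = {A.init} := rfl
lemma SO_zero_snd : (SO A σ 0).2 = ∅ := rfl
lemma SO_succ_fst (j : ℕ) : (SO A σ (j + 1)).1 = ⋃ q ∈ (SO A σ j).1, fch A σ j q := rfl
lemma SO_succ_snd (j : ℕ) : (SO A σ (j + 1)).2 =
    (if (SO A σ j).2 = ∅ then ⋃ q ∈ (SO A σ j).1, fch A σ j q
      else ⋃ q ∈ (SO A σ j).2, fch A σ j q) \ A.rejecting := rfl

theorem not_accepts_mh (hbad : ¬ Good A σ A.init 0) : ¬ (mh A).Accepts σ := by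
  intro hacc
  have hSbad : ∀ j q, q ∈ (SO A σ j).1 → ¬ Good A σ q j := by
    intro j
    induction j with
    | zero =>
      intro q hq
      obtain rfl : q = A.init := hq
      exact hbad
    | succ j ih =>
      intro q hq
      rw [SO_succ_fst] at hq
      simp only [Set.mem_iUnion] at hq
      obtain ⟨p, hp, hqf⟩ := hq
      exact hqf.1
  have hOS : ∀ j, (SO A σ j).2 ⊆ (SO A σ j).1 := by
    intro j
    induction j with
    | zero =>
      rw [SO_zero_snd]
      exact Set.empty_subset _
    | succ j ih =>
      rw [SO_succ_snd, SO_succ_fst]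
      intro q hq
      obtain ⟨hq1, -⟩ := hq
      split_ifs at hq1 with hO
      · exact hq1
      · simp only [Set.mem_iUnion] at hq1 ⊢
        obtain ⟨p, hp, hqf⟩ := hq1
        exact ⟨p, ih hp, hqf⟩
  have hONF : ∀ j q, q ∈ (SO A σ j).2 → q ∉ A.rejecting := by
    intro j q hq
    cases j with
    | zero => exact absurd hq (by rw [SO_zero_snd]; exact Set.notMem_empty q)
    | succ j =>
      rw [SO_succ_snd] at hq
      exact hq.2
  have hrun : (mh A).IsRun σ (SO A σ) := by
    refine ⟨rfl, fun j => ?_⟩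
    refine ⟨fch A σ j, fun q hq => fch_hit A σ (hSbad j q hq), rfl, rfl⟩
  have hbk : ∀ j, ∃ k, j ≤ k ∧ (SO A σ k).2 = ∅ := by
    have hM : ∀ (n : ℕ) (j : ℕ),
        ((Set.toFinite (SO A σ j).2).toFinset.sup fun q => rk A σ q j) ≤ n →
        ∃ k, j ≤ k ∧ (SO A σ k).2 = ∅ := by
      intro n
      induction n with
      | zero =>
        intro j hj
        by_cases h0 : (SO A σ j).2 = ∅
        · exact ⟨j, le_refl j, h0⟩
        · exfalso
          obtain ⟨q, hq⟩ := Set.nonempty_iff_ne_empty.2 h0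
          have h1 : 0 < rk A σ q j := rk_pos A σ (hSbad j q (hOS j hq))
          have h2 := Finset.le_sup (f := fun q => rk A σ q j)
            ((Set.toFinite (SO A σ j).2).mem_toFinset.2 hq)
          have h3 : rk A σ q j ≤ 0 := le_trans h2 hj
          omega
      | succ n ih =>
        intro j hj
        by_cases h0 : (SO A σ j).2 = ∅
        · exact ⟨j, le_refl j, h0⟩
        by_cases h1 : (SO A σ (j + 1)).2 = ∅
        · exact ⟨j + 1, by omega, h1⟩
        have hbot : (⊥ : ℕ) < (Set.toFinite (SO A σ j).2).toFinset.sup fun q => rk A σ q j := by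
          obtain ⟨q, hq⟩ := Set.nonempty_iff_ne_empty.2 h0
          have hpos : 0 < rk A σ q j := rk_pos A σ (hSbad j q (hOS j hq))
          have hle := Finset.le_sup (f := fun q => rk A σ q j)
            ((Set.toFinite (SO A σ j).2).mem_toFinset.2 hq)
          exact lt_of_lt_of_le hpos hle
        have hdec : ((Set.toFinite (SO A σ (j + 1)).2).toFinset.sup fun q => rk A σ q (j + 1)) <
            (Set.toFinite (SO A σ j).2).toFinset.sup fun q => rk A σ q j := by
          refine (Finset.sup_lt_iff hbot).2 ?_
          intro q hq
          rw [Set.Finite.mem_toFinset] at hq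
          rw [SO_succ_snd, if_neg h0] at hq
          obtain ⟨hq1, -⟩ := hq
          simp only [Set.mem_iUnion] at hq1
          obtain ⟨p, hp, hqf⟩ := hq1
          have hlt := hqf.2.resolve_left (hONF j p hp)
          calc rk A σ q (j + 1) < rk A σ p j := hlt
            _ ≤ _ := Finset.le_sup (f := fun q => rk A σ q j)
              ((Set.toFinite (SO A σ j).2).mem_toFinset.2 hp)
        obtain ⟨k, hk1, hk2⟩ := ih (j + 1) (by omega)
        exact ⟨k, by omega, hk2⟩
    intro j
    exact hM ((Set.toFinite (SO A σ j).2).toFinset.sup fun q => rk A σ q j) j (le_refl _)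
  have hinfset : {j | (SO A σ j).2 = ∅}.Infinite := by
    apply Set.infinite_of_not_bddAbove
    rintro ⟨u, hu⟩
    obtain ⟨k, hk1, hk2⟩ := hbk (u + 1)
    have := hu hk2
    omega
  exact hinfset (hacc (SO A σ) hrun)

end Dir2

theorem main_iff [Fintype Q] (A : ACA β Q) (σ : ℕ → Set β) :
    A.Accepts σ ↔ (mh A).Accepts σ := by
  constructor
  · exact accepts_mh_of_accepts A σ
  · intro h
    by_contra hna
    rw [accepts_iff_good] at hna
    exact not_accepts_mh A σ hna h


end

end MH
/-- Dualized Miyano-Hayashi: every alternating co-Büchi automaton with `m` states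
has a language-equivalent universal co-Büchi automaton with `O(2^m)`
(i.e. `2^{O(m)}`) states. -/
theorem aca_to_uca :
    ∃ c : ℕ, ∀ (β : Type) (Q : Type) (instQ : Fintype Q) (A : ACA β Q),
      ∃ (Q' : Type) (instQ' : Fintype Q') (B : UCA β Q'),
        @Fintype.card Q' instQ' ≤ 2 ^ (c * @Fintype.card Q instQ) ∧
        ∀ σ : ℕ → Set β, A.Accepts σ ↔ B.Accepts σ := by
  refine ⟨2, ?_⟩
  intro β Q instQ A
  letI := instQ
  refine ⟨Set Q × Set Q, inferInstance, MH.mh A, ?_, fun σ => MH.main_iff A σ⟩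
  rw [Fintype.card_prod, Fintype.card_set, two_mul, pow_add]
end

section
/- For the deterministic co-Büchi automaton A_φ of the two-message specification φ = F m1 ∧ F m2 (states q0,q1,q2,q3; rejecting states q0,q1,q2; q0 loops on ¬m1∧¬m2, goes to q1 on m1∧¬m2, to q2 on ¬m1∧m2, to q3 on m1∧m2; q1 loops on ¬m2 and goes to q3 on m2; q2 loops on ¬m1 and goes to q3 on m1; q3 loops), the strategy s1 for process p1 (inputs {m2}, outputs {m1}) that outputs m1 at every step is delay-dominant for A_φ, whereas the strategy t1 that outputs m1 at step j+1 iff m2 occurred at some step ≤ j is not delay-dominant for A_φ. -/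
open scoped Classical

/-- Successor function of the deterministic co-Büchi automaton `A_φ` for
`φ = F m₁ ∧ F m₂`, with `m₁ = 0` and `m₂ = 1` in `Fin 2` and states `q₀,…,q₃`
as `0,…,3` in `Fin 4`. -/
noncomputable def msgNext (q : Fin 4) (ι : Set (Fin 2)) : Fin 4 :=
  if q = 0 then
    (if (0 : Fin 2) ∈ ι ∧ (1 : Fin 2) ∈ ι then 3
     else if (0 : Fin 2) ∈ ι then 1
     else if (1 : Fin 2) ∈ ι then 2
     else 0)
  else if q = 1 then (if (1 : Fin 2) ∈ ι then 3 else 1)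
  else if q = 2 then (if (0 : Fin 2) ∈ ι then 3 else 2)
  else 3

/-- The deterministic ACA `A_φ` for `φ = F m₁ ∧ F m₂` with rejecting states
`{q₀, q₁, q₂}`. -/
noncomputable def msgACA : ACA (Fin 2) (Fin 4) where
  init := 0
  rejecting := {0, 1, 2}
  trans := fun q ι => {{msgNext q ι}}

/-- The strategy `s₁` of process `p₁` that outputs `m₁` at every step. -/
def msgS1 : Strat (Fin 2) := fun _ => {0}

/-- The strategy `t₁` of process `p₁` that outputs `m₁` at step `j+1` iff `m₂`
occurred at some step `≤ j`. -/
noncomputable def msgT1 : Strat (Fin 2) := fun h =>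
  if ∃ x ∈ h, (1 : Fin 2) ∈ x then {0} else ∅

/-! Since `A_φ` is deterministic, Duplicator never has a real choice: the delay-dominance game
has a single play, the pair of runs of `A_φ` on the two computations, and Duplicator wins iff
this play meets the winning condition. The run of `A_φ` is in a rejecting state at step `j` iff
`m₁` and `m₂` have not both occurred before `j`. Since `s₁` sends `m₁` from the start, its run
rejects only while `m₂` has not occurred, and then the run of every strategy rejects as well.
On the constant input `{m₂}`, the run of `t₁` is still in `q₂` at step 1, while the run of `s₁`
is already in the accepting sink `q₃`. -/

namespace DelayDom

variable {α Q : Type*}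

@[simp]
lemma length_hist (ρ : ℕ → Q × Q) (j : ℕ) : (hist ρ j).length = j := by
  simp [hist]

lemma hist_succ (ρ : ℕ → Q × Q) (j : ℕ) : hist ρ (j + 1) = hist ρ j ++ [ρ j] := by
  simp [hist, List.range_succ]

def detRun (q₀ : Q) (next : Q → Set α → Q) (σ : ℕ → Set α) : ℕ → Q
  | 0 => q₀
  | j + 1 => next (detRun q₀ next σ j) (σ j)

def detPlay (A : ACA α Q) (next : Q → Set α → Q) (σ σ' : ℕ → Set α) (j : ℕ) : Q × Q :=
  (detRun A.init next σ j, detRun A.init next σ' j)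

lemma detPlay_succ (A : ACA α Q) (next : Q → Set α → Q) (σ σ' : ℕ → Set α) (j : ℕ) :
    detPlay A next σ σ' (j + 1) =
      (next (detPlay A next σ σ' j).1 (σ j), next (detPlay A next σ σ' j).2 (σ' j)) :=
  rfl

def detDup (next : Q → Set α → Q) (σ σ' : ℕ → Set α) : DupStrategy Q where
  chooseSet h pq _ := {next pq.2 (σ' h.length)}
  chooseState h pq _ _ _ := next pq.1 (σ h.length)

section Deterministic

variable {A : ACA α Q} {next : Q → Set α → Q} {σ σ' : ℕ → Set α}

lemma detDup_valid (hdet : ∀ q ι, A.trans q ι = {{next q ι}}) :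
    DupValid A σ σ' (detDup next σ σ') := by
  intro h pq _ c hc
  rw [hdet, Set.mem_singleton_iff] at hc
  subst hc
  exact ⟨by rw [hdet]; rfl, fun _ _ => rfl⟩

lemma eq_detPlay_of_dupConsistent {ρ : ℕ → Q × Q}
    (hρ : DupConsistent A σ σ' (detDup next σ σ') ρ) (j : ℕ) :
    ρ j = detPlay A next σ σ' j := by
  induction j with
  | zero => exact hρ.1
  | succ j ih =>
    obtain ⟨c, -, h2, h1⟩ := hρ.2 j
    simp only [detDup, length_hist, Set.mem_singleton_iff, ih] at h1 h2
    exact Prod.ext h1 h2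

lemma choices_of_dupReach (hdet : ∀ q ι, A.trans q ι = {{next q ι}}) {τ : DupStrategy Q}
    (hτ : DupValid A σ σ' τ) {h : List (Q × Q)} {pq : Q × Q} (hr : DupReach A σ σ' τ h pq) :
    τ.chooseSet h pq {next pq.1 (σ h.length)} = {next pq.2 (σ' h.length)} ∧
      τ.chooseState h pq {next pq.1 (σ h.length)} {next pq.2 (σ' h.length)}
        (next pq.2 (σ' h.length)) = next pq.1 (σ h.length) := by
  obtain ⟨hset, hstate⟩ := hτ h pq hr _ (by rw [hdet]; exact Set.mem_singleton _)
  rw [hdet, Set.mem_singleton_iff] at hset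
  refine ⟨hset, ?_⟩
  simpa [hset] using hstate _ (hset ▸ rfl)

lemma dupReach_detPlay (hdet : ∀ q ι, A.trans q ι = {{next q ι}}) {τ : DupStrategy Q}
    (hτ : DupValid A σ σ' τ) (j : ℕ) :
    DupReach A σ σ' τ (hist (detPlay A next σ σ') j) (detPlay A next σ σ' j) := by
  induction j with
  | zero => exact .init
  | succ j ih =>
    obtain ⟨hset, hstate⟩ := choices_of_dupReach hdet hτ ih
    have hstep := DupReach.step ih (by rw [hdet]; exact Set.mem_singleton _)
      (hset ▸ Set.mem_singleton (next _ (σ' (hist (detPlay A next σ σ') j).length)))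
    rw [hset, hstate] at hstep
    simpa only [hist_succ, length_hist, detPlay_succ] using hstep

lemma detPlay_dupConsistent (hdet : ∀ q ι, A.trans q ι = {{next q ι}}) {τ : DupStrategy Q}
    (hτ : DupValid A σ σ' τ) : DupConsistent A σ σ' τ (detPlay A next σ σ') := by
  refine ⟨rfl, fun j => ?_⟩
  obtain ⟨hset, hstate⟩ := choices_of_dupReach hdet hτ (dupReach_detPlay hdet hτ j)
  simp only [length_hist] at hset hstate
  exact ⟨_, by rw [hdet]; exact Set.mem_singleton _, hset ▸ rfl, hset ▸ hstate.symm⟩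

theorem dupWins_iff_of_deterministic (hdet : ∀ q ι, A.trans q ι = {{next q ι}}) :
    DupWins A σ σ' ↔ ∀ j, detRun A.init next σ' j ∈ A.rejecting →
      ∃ j', j ≤ j' ∧ detRun A.init next σ j' ∈ A.rejecting := by
  constructor
  · rintro ⟨τ, hτ, hwin⟩
    exact hwin _ (detPlay_dupConsistent hdet hτ)
  · intro hwin
    refine ⟨detDup next σ σ', detDup_valid hdet, fun ρ hρ => ?_⟩
    rwa [funext (eq_detPlay_of_dupConsistent hρ)]

end Deterministic

end DelayDom

open DelayDom

section Computation

variable {α : Type*} {I O : Set α} {a : α}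

lemma mem_comp_of_mem_inputs (hI : a ∈ I) (hO : a ∉ O) (s : Strat α) (γ : ℕ → Set α) (j : ℕ) :
    a ∈ comp I O s γ j ↔ a ∈ γ j := by
  simp [comp, hI, hO]

lemma mem_comp_of_mem_outputs (hI : a ∉ I) (hO : a ∈ O) (s : Strat α) (γ : ℕ → Set α)
    (j : ℕ) : a ∈ comp I O s γ j ↔ a ∈ s ((List.range j).map fun k => γ k ∩ I) := by
  simp [comp, hI, hO]

end Computation

lemma detRun_msgNext (σ : ℕ → Set (Fin 2)) (j : ℕ) :
    detRun 0 msgNext σ j =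
      if (∃ k < j, 0 ∈ σ k) ∧ (∃ k < j, 1 ∈ σ k) then 3
      else if ∃ k < j, 0 ∈ σ k then 1
      else if ∃ k < j, 1 ∈ σ k then 2
      else 0 := by
  induction j with
  | zero => simp [detRun]
  | succ j ih =>
    simp only [detRun, ih, Nat.lt_succ_iff_lt_or_eq, or_and_right, exists_or, exists_eq_left]
    by_cases a0 : ∃ k < j, 0 ∈ σ k <;> by_cases a1 : ∃ k < j, 1 ∈ σ k <;>
      by_cases b0 : 0 ∈ σ j <;> by_cases b1 : 1 ∈ σ j <;> simp [msgNext, *]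

lemma msgRun_mem_rejecting_iff (σ : ℕ → Set (Fin 2)) (j : ℕ) :
    detRun msgACA.init msgNext σ j ∈ msgACA.rejecting ↔
      ¬((∃ k < j, 0 ∈ σ k) ∧ (∃ k < j, 1 ∈ σ k)) := by
  change detRun 0 msgNext σ j ∈ ({0, 1, 2} : Set (Fin 4)) ↔ _
  rw [detRun_msgNext]
  split_ifs <;> simp_all

lemma msgRun_mem_rejecting_of_forall_zero_mem {σ σ' : ℕ → Set (Fin 2)} (h0 : ∀ k, 0 ∈ σ' k)
    (h1 : ∀ k, 1 ∈ σ k ↔ 1 ∈ σ' k) {j : ℕ}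
    (hj : detRun msgACA.init msgNext σ' j ∈ msgACA.rejecting) :
    detRun msgACA.init msgNext σ j ∈ msgACA.rejecting := by
  rw [msgRun_mem_rejecting_iff] at hj ⊢
  rintro ⟨-, k, hk, hk1⟩
  exact hj ⟨⟨k, hk, h0 k⟩, k, hk, (h1 k).1 hk1⟩

/-- For the two-message specification `φ = F m₁ ∧ F m₂` and its deterministic ACA,
the strategy that immediately sends `m₁` is delay-dominant, while the strategy
that waits for `m₂` before sending `m₁` is not. Process `p₁` has inputs `{m₂}`
and outputs `{m₁}`. -/
theorem msg_example :
    DelayDominant msgACA ({1} : Set (Fin 2)) ({0} : Set (Fin 2)) msgS1 ∧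
    ¬ DelayDominant msgACA ({1} : Set (Fin 2)) ({0} : Set (Fin 2)) msgT1 := by
  have hdet : ∀ q ι, msgACA.trans q ι = {{msgNext q ι}} := fun _ _ => rfl
  have hm₁ (s : Strat (Fin 2)) γ k :
      0 ∈ comp {1} {0} s γ k ↔ 0 ∈ s ((List.range k).map fun i => γ i ∩ {1}) :=
    mem_comp_of_mem_outputs (by decide) (Set.mem_singleton _) s γ k
  have hm₂ (s : Strat (Fin 2)) γ k : 1 ∈ comp {1} {0} s γ k ↔ 1 ∈ γ k :=
    mem_comp_of_mem_inputs (Set.mem_singleton _) (by decide) s γ k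
  refine ⟨fun t γ => ?_, fun hdom => ?_⟩
  · rw [DelayDominatesOn, dupWins_iff_of_deterministic hdet]
    exact fun j hj => ⟨j, le_rfl, msgRun_mem_rejecting_of_forall_zero_mem
      (fun k => (hm₁ _ γ k).2 rfl) (fun k => (hm₂ t γ k).trans (hm₂ _ γ k).symm) hj⟩
  · have hwin := hdom msgS1 fun _ => {1}
    rw [DelayDominatesOn, dupWins_iff_of_deterministic hdet] at hwin
    have ht₁ : 0 ∉ comp {1} {0} msgT1 (fun _ => {1}) 0 := by simp [hm₁, msgT1]
    obtain ⟨j, hj, hrej⟩ := hwin 1 <| (msgRun_mem_rejecting_iff _ _).2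
      fun ⟨⟨k, hk, hk0⟩, _⟩ => ht₁ (Nat.lt_one_iff.1 hk ▸ hk0)
    exact (msgRun_mem_rejecting_iff _ _).1 hrej
      ⟨⟨0, hj, (hm₁ _ _ 0).2 rfl⟩, 0, hj, (hm₂ _ _ 0).2 rfl⟩
end
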